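/- Let V be a Whittaker module over R(f) with cyclic Whittaker vector w of type η, and let Z_V = Ann_{Z(R)}(V). Then the annihilator of w in R(f) equals R·Z_V + R·R_η(E). -/

import Mathlib

open Polynomial

inductive SmithGen : Type
  | E | F | H

open SmithGen in
inductive SmithRel (f : ℂ[X]) : FreeAlgebra ℂ SmithGen → FreeAlgebra ℂ SmithGen → Prop
  | ef : SmithRel f (FreeAlgebra.ι ℂ E * FreeAlgebra.ι ℂ F - FreeAlgebra.ι ℂ F * FreeAlgebra.ι ℂ E)
      (aeval (FreeAlgebra.ι ℂ H) f)
  | he : SmithRel f (FreeAlgebra.ι ℂ H * FreeAlgebra.ι ℂ E - FreeAlgebra.ι ℂ E * FreeAlgebra.ι ℂ H)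
      (FreeAlgebra.ι ℂ E)
  | hf : SmithRel f (FreeAlgebra.ι ℂ H * FreeAlgebra.ι ℂ F - FreeAlgebra.ι ℂ F * FreeAlgebra.ι ℂ H)
      (-FreeAlgebra.ι ℂ F)

/-- Smith's algebra `R(f)`, similar to `U(sl₂)`. -/
abbrev SmithAlgebra (f : ℂ[X]) : Type := RingQuot (SmithRel f)

noncomputable def SmithE (f : ℂ[X]) : SmithAlgebra f :=
  RingQuot.mkAlgHom ℂ (SmithRel f) (FreeAlgebra.ι ℂ SmithGen.E)

noncomputable def SmithF (f : ℂ[X]) : SmithAlgebra f :=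
  RingQuot.mkAlgHom ℂ (SmithRel f) (FreeAlgebra.ι ℂ SmithGen.F)

noncomputable def SmithH (f : ℂ[X]) : SmithAlgebra f :=
  RingQuot.mkAlgHom ℂ (SmithRel f) (FreeAlgebra.ι ℂ SmithGen.H)

/-- The Casimir element `Ω = 2FE + u(H+1)`. -/
noncomputable def SmithOmega (f u : ℂ[X]) : SmithAlgebra f :=
  2 * SmithF f * SmithE f + aeval (SmithH f) (u.comp (X + 1))

/-!
The annihilator of `w` obviously contains `Z_V` and `E - c`; the point is the converse.
Let `u` solve `u(X + 1) - u = 2f` (a combination of Bernoulli polynomials), so that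
`Ω = 2FE + u(H + 1)` is central. The sum of the subalgebra `ℂ[H, Ω]` and the left ideal `R(E - c)`
contains `1` and is stable under left multiplication by `E`, `F` and `H`, hence is all of `R`:
every element of `R` is `∑ (-H)ᵇ gᵦ(Ω)` modulo `R(E - c)`. The vectors `gᵦ(Ω) w` are Whittaker
vectors, and on `p(-H) v`, for a Whittaker vector `v`, the operator `E - c` acts as `c` times the
forward difference of `p`. So if `∑ (-H)ᵇ gᵦ(Ω) w = 0`, applying `(E - c)ᵃ` for the top index `a`
leaves `cᵃ a! gₐ(Ω) w = 0`; descending, every `gᵦ(Ω)` kills `w`, hence kills `V = R w`.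
-/

section Generation

variable {K A : Type*} [CommRing K] [Ring A] [Algebra K A]

theorem Submodule.eq_top_of_one_mem_of_mul_mem {s : Set A} (hs : Algebra.adjoin K s = ⊤)
    (N : Submodule K A) (h1 : 1 ∈ N) (hmul : ∀ a ∈ s, ∀ x ∈ N, a * x ∈ N) : N = ⊤ := by
  have key : ∀ r ∈ Algebra.adjoin K s, ∀ x ∈ N, r * x ∈ N := by
    intro r hr
    induction hr using Algebra.adjoin_induction with
    | mem a ha => exact hmul a ha
    | algebraMap k => exact fun x hx => by rw [← Algebra.smul_def]; exact N.smul_mem k hx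
    | add a b _ _ ha hb =>
      exact fun x hx => by rw [add_mul]; exact N.add_mem (ha x hx) (hb x hx)
    | mul a b _ _ ha hb => exact fun x hx => by rw [mul_assoc]; exact ha _ (hb x hx)
  refine eq_top_iff.mpr fun r _ => ?_
  simpa using key r (hs ▸ Algebra.mem_top) 1 h1

theorem exists_mul_eq_mul_of_mem_adjoin {s : Set A} {a : A}
    (hs : ∀ t ∈ s, ∃ y ∈ Algebra.adjoin K s, a * t = y * a) {x : A}
    (hx : x ∈ Algebra.adjoin K s) : ∃ y ∈ Algebra.adjoin K s, a * x = y * a := by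
  induction hx using Algebra.adjoin_induction with
  | mem t ht => exact hs t ht
  | algebraMap k =>
    exact ⟨algebraMap K A k, Subalgebra.algebraMap_mem _ k, (Algebra.commutes k a).symm⟩
  | add x₁ x₂ _ _ h₁ h₂ =>
    obtain ⟨⟨y₁, hy₁, e₁⟩, ⟨y₂, hy₂, e₂⟩⟩ := And.intro h₁ h₂
    exact ⟨y₁ + y₂, add_mem hy₁ hy₂, by rw [mul_add, e₁, e₂, add_mul]⟩
  | mul x₁ x₂ _ _ h₁ h₂ =>
    obtain ⟨⟨y₁, hy₁, e₁⟩, ⟨y₂, hy₂, e₂⟩⟩ := And.intro h₁ h₂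
    exact ⟨y₁ * y₂, mul_mem hy₁ hy₂, by rw [← mul_assoc, e₁, mul_assoc, e₂, mul_assoc]⟩

theorem SemiconjBy.aeval {a x y : A} (h : SemiconjBy a x y) (p : K[X]) :
    SemiconjBy a (aeval x p) (aeval y p) := by
  induction p using Polynomial.induction_on with
  | C k => simp only [aeval_C]; exact Algebra.commute_algebraMap_right k a
  | add p q hp hq => simpa only [map_add] using hp.add_right hq
  | monomial n k _ =>
    simp only [map_mul, aeval_C, aeval_X_pow]
    exact SemiconjBy.mul_right (Algebra.commute_algebraMap_right k a) (h.pow_right (n + 1))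

theorem exists_eq_eval₂_of_mem_adjoin_pair {h z : A} (hz : z ∈ Subalgebra.center K A)
    {x : A} (hx : x ∈ Algebra.adjoin K {h, z}) :
    ∃ q : K[X][X], x = q.eval₂ (aeval z).toRingHom h := by
  have hcomm : ∀ (q : K[X][X]) k, Commute ((aeval z).toRingHom (q.coeff k)) h := fun q k =>
    (SemiconjBy.aeval (Subalgebra.mem_center_iff.mp hz h) (q.coeff k)).symm
  induction hx using Algebra.adjoin_induction with
  | mem t ht =>
    rcases ht with rfl | rfl
    · exact ⟨X, by simp⟩
    · exact ⟨C X, by simp⟩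
  | algebraMap k => exact ⟨C (C k), by simp⟩
  | add x₁ x₂ _ _ h₁ h₂ =>
    obtain ⟨⟨q₁, rfl⟩, ⟨q₂, rfl⟩⟩ := And.intro h₁ h₂
    exact ⟨q₁ + q₂, (eval₂_add _ _).symm⟩
  | mul x₁ x₂ _ _ h₁ h₂ =>
    obtain ⟨⟨q₁, rfl⟩, ⟨q₂, rfl⟩⟩ := And.intro h₁ h₂
    exact ⟨q₁ * q₂, (eval₂_mul_noncomm _ _ (hcomm q₂)).symm⟩

end Generation

noncomputable def polyFwdDiff {R : Type*} [CommRing R] (p : R[X]) : R[X] := p.comp (X + 1) - p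

section FwdDiff

theorem eval_polyFwdDiff_iterate {R : Type*} [CommRing R] (n : ℕ) (p : R[X]) :
    (polyFwdDiff^[n] p).eval = (fwdDiff 1)^[n] p.eval := by
  have : Function.Semiconj (fun q : R[X] => q.eval) polyFwdDiff (fwdDiff 1) := fun q =>
    funext fun x => by simp [polyFwdDiff, fwdDiff, add_comm]
  exact this.iterate_right n p

variable {K : Type*} [Field K] [CharZero K]

theorem polyFwdDiff_iterate_X_pow_of_lt {b n : ℕ} (h : b < n) :
    polyFwdDiff^[n] (X ^ b : K[X]) = 0 := Polynomial.funext fun x => by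
  have hpow : (X ^ b : K[X]).eval = fun r => r ^ b := funext fun r => by simp
  have := congrFun (eval_polyFwdDiff_iterate n (X ^ b : K[X])) x
  rw [hpow, fwdDiff_iter_pow_eq_zero_of_lt h] at this
  simpa using this

theorem polyFwdDiff_iterate_X_pow_self (n : ℕ) :
    polyFwdDiff^[n] (X ^ n : K[X]) = C (n.factorial : K) := Polynomial.funext fun x => by
  have hpow : (X ^ n : K[X]).eval = fun r => r ^ n := funext fun r => by simp
  have := congrFun (eval_polyFwdDiff_iterate n (X ^ n : K[X])) x
  rw [hpow, fwdDiff_iter_eq_factorial] at this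
  simpa using this

theorem polyFwdDiff_map_bernoulli (n : ℕ) :
    polyFwdDiff ((Polynomial.bernoulli (n + 1)).map (algebraMap ℚ K)) =
      C ((n : K) + 1) * X ^ n := by
  have := congrArg (map (algebraMap ℚ K)) (bernoulli_comp_one_add_X (n + 1))
  rw [map_comp] at this
  simp only [Polynomial.map_add, Polynomial.map_one, map_X] at this
  simp [polyFwdDiff, add_comm X, this]

theorem exists_polyFwdDiff_eq (g : K[X]) : ∃ u : K[X], polyFwdDiff u = g := by
  refine ⟨∑ k ∈ Finset.range (g.natDegree + 1),
    C (g.coeff k / (k + 1)) * (Polynomial.bernoulli (k + 1)).map (algebraMap ℚ K), ?_⟩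
  conv_rhs => rw [g.as_sum_range_C_mul_X_pow]
  rw [polyFwdDiff, sum_comp, ← Finset.sum_sub_distrib]
  refine Finset.sum_congr rfl fun k _ => ?_
  rw [mul_comp, C_comp, ← mul_sub, ← polyFwdDiff, polyFwdDiff_map_bernoulli, ← mul_assoc,
    ← C_mul, div_mul_cancel₀ _ (Nat.cast_add_one_ne_zero k)]

end FwdDiff

section WhittakerVectors

variable {K A V : Type*} [Field K] [Ring A] [Algebra K A]
  [AddCommGroup V] [Module A V] [Module K V] [IsScalarTower K A V]
  {e : A} {c : K}

theorem aeval_smul_of_smul_eq {v : V} (hv : e • v = c • v) (p : K[X]) :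
    aeval e p • v = p.eval c • v := by
  have hpow : ∀ n : ℕ, e ^ n • v = c ^ n • v := fun n => by
    induction n with
    | zero => simp
    | succ n ih => rw [pow_succ', mul_smul, ih, smul_comm, hv, smul_smul, pow_succ]
  induction p using Polynomial.induction_on' with
  | add p q hp hq => rw [map_add, add_smul, hp, hq, eval_add, add_smul]
  | monomial n k =>
    rw [aeval_monomial, mul_smul, hpow, algebraMap_smul, smul_smul, eval_monomial]

theorem sub_algebraMap_pow_smul_aeval_smul {h : A} (he : SemiconjBy e h (h + 1)) {v : V}
    (hv : e • v = c • v) (n : ℕ) (p : K[X]) :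
    (e - algebraMap K A c) ^ n • (aeval h p • v) =
      c ^ n • (aeval h (polyFwdDiff^[n] p) • v) := by
  induction n generalizing p with
  | zero => simp
  | succ n ih =>
    have step :
        (e - algebraMap K A c) • (aeval h p • v) = c • (aeval h (polyFwdDiff p) • v) := by
      rw [sub_smul, smul_smul, (he.aeval p).eq, mul_smul, hv, algebraMap_smul, polyFwdDiff,
        map_sub, aeval_comp, map_add, aeval_X, map_one, sub_smul, smul_sub, smul_comm]
    rw [pow_succ, mul_smul, step, smul_comm, ih, smul_smul, _root_.pow_succ',
      Function.iterate_succ_apply]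

variable [CharZero K]

theorem eq_zero_of_sum_pow_smul_eq_zero {h : A} (he : SemiconjBy e h (h + 1)) (hc : c ≠ 0)
    {v : ℕ → V} (hv : ∀ b, e • v b = c • v b) (s : Finset ℕ)
    (hs : ∑ b ∈ s, h ^ b • v b = 0) : ∀ b ∈ s, v b = 0 := by
  induction s using Finset.induction_on_max with
  | empty => simp
  | insert a s hlt ih =>
    rw [Finset.sum_insert fun ha => (hlt a ha).false] at hs
    have hpow : ∀ b, h ^ b • v b = aeval h (X ^ b : K[X]) • v b := fun b => by rw [aeval_X_pow]
    have hkill : ∀ b ∈ s, (e - algebraMap K A c) ^ a • (h ^ b • v b) = 0 := fun b hb => by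
      rw [hpow, sub_algebraMap_pow_smul_aeval_smul he (hv b),
        polyFwdDiff_iterate_X_pow_of_lt (hlt b hb), map_zero, zero_smul, smul_zero]
    have htop : (e - algebraMap K A c) ^ a • (h ^ a • v a) = (c ^ a * a.factorial) • v a := by
      rw [hpow, sub_algebraMap_pow_smul_aeval_smul he (hv a), polyFwdDiff_iterate_X_pow_self,
        aeval_C, algebraMap_smul, smul_smul]
    have hva : v a = 0 := by
      have := congrArg ((e - algebraMap K A c) ^ a • · : V → V) hs
      simp only [smul_add, Finset.smul_sum, Finset.sum_eq_zero hkill, htop, smul_zero,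
        add_zero] at this
      exact (smul_eq_zero.mp this).resolve_left (by simp [hc, Nat.factorial_ne_zero])
    rw [hva, smul_zero, zero_add] at hs
    simpa [hva] using ih hs

theorem mem_span_of_mem_adjoin_of_smul_eq_zero {h z : A} {w : V}
    (he : SemiconjBy e h (h + 1)) (hz : z ∈ Subalgebra.center K A) (hc : c ≠ 0)
    (hw : e • w = c • w) (hcyc : ∀ v : V, ∃ r : A, v = r • w) {x : A}
    (hx : x ∈ Algebra.adjoin K {h, z}) (hxw : x • w = 0) :
    x ∈ Submodule.span A {y | y ∈ Subalgebra.center K A ∧ ∀ v : V, y • v = 0} := by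
  obtain ⟨q, rfl⟩ := exists_eq_eval₂_of_mem_adjoin_pair hz hx
  set g : ℕ → A := fun b => aeval z (q.coeff b)
  have hg : ∀ b, g b ∈ Subalgebra.center K A := fun b =>
    Algebra.adjoin_le (Set.singleton_subset_iff.mpr hz) (aeval_mem_adjoin_singleton K z)
  have hsum : q.eval₂ (aeval z).toRingHom h = ∑ b ∈ q.support, h ^ b * g b := by
    rw [eval₂_eq_sum, Polynomial.sum_def]
    exact Finset.sum_congr rfl fun b _ => (Subalgebra.mem_center_iff.mp (hg b) _).symm
  have hwhit : ∀ b, e • (g b • w) = c • (g b • w) := fun b => by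
    rw [smul_smul, Subalgebra.mem_center_iff.mp (hg b), mul_smul, hw, smul_comm]
  have hzero := eq_zero_of_sum_pow_smul_eq_zero he hc hwhit q.support <| by
    simpa only [hsum, Finset.sum_smul, mul_smul] using hxw
  rw [hsum]
  refine Submodule.sum_mem _ fun b hb => Submodule.smul_mem _ (h ^ b) (Submodule.subset_span
    ⟨hg b, fun v => ?_⟩)
  obtain ⟨r, rfl⟩ := hcyc v
  rw [smul_smul, ← Subalgebra.mem_center_iff.mp (hg b), mul_smul, hzero b hb, smul_zero]

end WhittakerVectors

namespace SmithAlgebra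

variable (f : ℂ[X])

local notation "E" => SmithE f
local notation "F" => SmithF f
local notation "H" => SmithH f

theorem E_mul_F : E * F = F * E + aeval H f := by
  have h := RingQuot.mkAlgHom_rel ℂ (SmithRel.ef (f := f))
  rw [map_sub, map_mul, map_mul, ← aeval_algHom_apply, sub_eq_iff_eq_add'] at h
  exact h

theorem semiconjBy_E_H : SemiconjBy E H (H - 1) := by
  have h : H * E - E * H = E := by
    have h := RingQuot.mkAlgHom_rel ℂ (SmithRel.he (f := f))
    rw [map_sub, map_mul, map_mul] at h
    exact h
  calc E * H = H * E - (H * E - E * H) := by abel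
    _ = (H - 1) * E := by rw [h, sub_mul, one_mul]

theorem semiconjBy_E_neg_H : SemiconjBy E (-H) (-H + 1) := by
  have h := (semiconjBy_E_H f).neg_right
  rwa [neg_sub, sub_eq_neg_add] at h

theorem semiconjBy_F_H : SemiconjBy F H (H + 1) := by
  have h : H * F - F * H = -F := by
    have h := RingQuot.mkAlgHom_rel ℂ (SmithRel.hf (f := f))
    rw [map_sub, map_mul, map_mul, map_neg] at h
    exact h
  calc F * H = H * F - (H * F - F * H) := by abel
    _ = (H + 1) * F := by rw [h, sub_neg_eq_add, add_mul, one_mul]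

theorem adjoin_E_F_H : Algebra.adjoin ℂ {E, F, H} = ⊤ := by
  have hgen : {E, F, H} = RingQuot.mkAlgHom ℂ (SmithRel f) '' Set.range (FreeAlgebra.ι ℂ) := by
    ext x
    simp only [Set.mem_insert_iff, Set.mem_singleton_iff, Set.mem_image, Set.mem_range]
    constructor
    · rintro (rfl | rfl | rfl)
      exacts [⟨_, ⟨.E, rfl⟩, rfl⟩, ⟨_, ⟨.F, rfl⟩, rfl⟩, ⟨_, ⟨.H, rfl⟩, rfl⟩]
    · rintro ⟨_, ⟨g, rfl⟩, rfl⟩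
      cases g <;> simp [SmithE, SmithF, SmithH]
  rw [hgen, Algebra.adjoin_image, FreeAlgebra.adjoin_range_ι, Algebra.map_top,
    AlgHom.range_eq_top]
  exact RingQuot.mkAlgHom_surjective ℂ (SmithRel f)

variable {f} {u : ℂ[X]}

theorem aeval_comp_X_add_one (hu : polyFwdDiff u = C 2 * f) {A : Type*} [Ring A]
    [Algebra ℂ A] (x : A) : aeval x (u.comp (X + 1)) = aeval x u + 2 * aeval x f := by
  have h : u.comp (X + 1) = u + C 2 * f := by rw [← hu, polyFwdDiff, add_sub_cancel]
  rw [h, map_add, map_mul, aeval_C, map_ofNat]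

theorem commute_E_omega (hu : polyFwdDiff u = C 2 * f) : Commute E (SmithOmega f u) := by
  have hU : E * aeval H (u.comp (X + 1)) = aeval H u * E := by
    rw [((semiconjBy_E_H f).aeval _).eq, aeval_comp]
    simp
  change E * SmithOmega f u = SmithOmega f u * E
  rw [SmithOmega, mul_add, add_mul, hU, aeval_comp_X_add_one hu,
    show E * (2 * F * E) = 2 * (E * F) * E by noncomm_ring, E_mul_F]
  noncomm_ring

theorem commute_F_omega (hu : polyFwdDiff u = C 2 * f) : Commute F (SmithOmega f u) := by
  have hU : F * aeval H (u.comp (X + 1)) = (aeval (H + 1) u + 2 * aeval (H + 1) f) * F := by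
    rw [((semiconjBy_F_H f).aeval _).eq, aeval_comp_X_add_one hu]
  have hf : F * aeval H f = aeval (H + 1) f * F := ((semiconjBy_F_H f).aeval f).eq
  change F * SmithOmega f u = SmithOmega f u * F
  rw [SmithOmega, mul_add, add_mul, hU, aeval_comp, map_add, aeval_X, map_one,
    show 2 * F * E * F = 2 * F * (E * F) by noncomm_ring, E_mul_F, mul_add,
    mul_assoc 2 F (aeval H f), hf]
  noncomm_ring

theorem commute_H_omega : Commute H (SmithOmega f u) := by
  have hFE : Commute (F * E) H := by
    have hF : SemiconjBy F (H - 1) H := by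
      simpa using (semiconjBy_F_H f).sub_right (Commute.one_right F)
    exact hF.mul_left (semiconjBy_E_H f)
  rw [SmithOmega, mul_assoc]
  exact ((Commute.ofNat_right H 2).mul_right hFE.symm).add_right
    (SemiconjBy.aeval (Commute.refl H) _)

theorem omega_mem_center (hu : polyFwdDiff u = C 2 * f) :
    SmithOmega f u ∈ Subalgebra.center ℂ (SmithAlgebra f) := by
  have h : Algebra.adjoin ℂ {E, F, H} ≤ Subalgebra.centralizer ℂ {SmithOmega f u} := by
    rw [Algebra.adjoin_le_iff]
    rintro x (rfl | rfl | rfl) <;> simp only [SetLike.mem_coe, Subalgebra.mem_centralizer_iff,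
      Set.mem_singleton_iff, forall_eq]
    exacts [(commute_E_omega hu).symm.eq, (commute_F_omega hu).symm.eq, commute_H_omega.symm.eq]
  rw [adjoin_E_F_H, top_le_iff, Subalgebra.centralizer_eq_top_iff_subset] at h
  exact h rfl

section Decomposition

variable {c : ℂ}

local notation "P" => Algebra.adjoin ℂ {-SmithH f, SmithOmega f u}
local notation "I" => Submodule.restrictScalars ℂ
  (Submodule.span (SmithAlgebra f) {SmithE f - algebraMap ℂ (SmithAlgebra f) c})

theorem mul_E_sub_algebraMap_mem (y : SmithAlgebra f) : y * (E - algebraMap ℂ _ c) ∈ I :=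
  Submodule.smul_mem _ y (Submodule.mem_span_singleton_self _)

theorem E_mul_mem_sup (hu : polyFwdDiff u = C 2 * f) {x : SmithAlgebra f} (hx : x ∈ P) :
    E * x ∈ Subalgebra.toSubmodule P ⊔ I := by
  obtain ⟨y, hy, hxy⟩ : ∃ y ∈ P, E * x = y * E := by
    refine exists_mul_eq_mul_of_mem_adjoin ?_ hx
    rintro t (rfl | rfl)
    · exact ⟨-H + 1, add_mem (Algebra.subset_adjoin (by simp)) (one_mem _), semiconjBy_E_neg_H f⟩
    · exact ⟨_, Algebra.subset_adjoin (by simp), commute_E_omega hu⟩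
  have : y * E = y * (E - algebraMap ℂ _ c) + c • y := by
    rw [mul_sub, Algebra.smul_def, ← Algebra.commutes, sub_add_cancel]
  rw [hxy, this]
  exact add_mem (Submodule.mem_sup_right (mul_E_sub_algebraMap_mem y))
    (Submodule.mem_sup_left (Subalgebra.smul_mem _ hy c))

theorem F_mul_mem_sup (hu : polyFwdDiff u = C 2 * f) (hc : c ≠ 0) {x : SmithAlgebra f}
    (hx : x ∈ P) : F * x ∈ Subalgebra.toSubmodule P ⊔ I := by
  have hH : -H ∈ P := Algebra.subset_adjoin (by simp)
  have hΩ : SmithOmega f u ∈ P := Algebra.subset_adjoin (by simp)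
  have hU : aeval H (u.comp (X + 1)) ∈ P :=
    Algebra.adjoin_le (by simpa using neg_mem hH) (aeval_mem_adjoin_singleton ℂ H)
  obtain ⟨y, hy, hxy⟩ : ∃ y ∈ P, F * x = y * F := by
    refine exists_mul_eq_mul_of_mem_adjoin ?_ hx
    rintro t (rfl | rfl)
    · exact ⟨-(H + 1), by rw [neg_add]; exact add_mem hH (neg_mem (one_mem _)),
        (semiconjBy_F_H f).neg_right⟩
    · exact ⟨_, hΩ, commute_F_omega hu⟩
  -- `2FE = Ω - u(H + 1)`, and `FE ≡ cF` modulo the left ideal `I`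
  have : y * F = c⁻¹ • ((2 : ℂ)⁻¹ • (y * SmithOmega f u - y * aeval H (u.comp (X + 1)))
      - y * F * (E - algebraMap ℂ _ c)) := by
    rw [SmithOmega, mul_add, add_sub_cancel_right,
      show y * (2 * F * E) = (2 : ℂ) • (y * F * E) by
        rw [Algebra.smul_def, map_ofNat]; noncomm_ring,
      inv_smul_smul₀ two_ne_zero, mul_sub, ← Algebra.commutes, ← Algebra.smul_def,
      sub_sub_cancel, inv_smul_smul₀ hc]
  rw [hxy, this]
  exact Submodule.smul_mem _ _ (sub_mem (Submodule.mem_sup_left (Submodule.smul_mem _ _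
    (sub_mem (Subalgebra.mul_mem _ hy hΩ) (Subalgebra.mul_mem _ hy hU)))) (Submodule.mem_sup_right
    (mul_E_sub_algebraMap_mem _)))

theorem adjoin_neg_H_omega_sup_span_eq_top (hu : polyFwdDiff u = C 2 * f) (hc : c ≠ 0) :
    Subalgebra.toSubmodule P ⊔ I = ⊤ := by
  refine Submodule.eq_top_of_one_mem_of_mul_mem (adjoin_E_F_H f) _
    (Submodule.mem_sup_left ((Subalgebra.mem_toSubmodule _).mpr (one_mem _))) ?_
  rintro a ha x hx
  obtain ⟨p, hp, i, hi, rfl⟩ := Submodule.mem_sup.mp hx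
  rw [mul_add]
  refine add_mem ?_ (Submodule.mem_sup_right (Submodule.smul_mem _ a hi))
  rcases ha with rfl | rfl | rfl
  · exact E_mul_mem_sup hu hp
  · exact F_mul_mem_sup hu hc hp
  · have hH : H ∈ P := by simpa using neg_mem (Algebra.subset_adjoin (by simp) : -H ∈ P)
    exact Submodule.mem_sup_left (Subalgebra.mul_mem _ hH hp)

end Decomposition

end SmithAlgebra

/-- Let `V = R·w` be a Whittaker module of type `η` (where `η(E) = c ≠ 0`).  Then the
annihilator of the cyclic Whittaker vector `w` is `R·Z_V + R·R_η(E)`, i.e. the left ideal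
generated by `Z_V = Ann_{Z(R)}(V)` together with `ker η ⊆ ℂ[E]`. -/
theorem smith_annihilator_of_cyclic_whittaker_vector (f : ℂ[X]) (c : ℂ) (hc : c ≠ 0)
    (V : Type) [AddCommGroup V] [Module (SmithAlgebra f) V] (w : V)
    (hw : SmithE f • w = algebraMap ℂ (SmithAlgebra f) c • w)
    (hcyc : ∀ v : V, ∃ r : SmithAlgebra f, v = r • w) :
    {r : SmithAlgebra f | r • w = 0} =
      (Submodule.span (SmithAlgebra f)
        ({z | z ∈ Subalgebra.center ℂ (SmithAlgebra f) ∧ ∀ v : V, z • v = 0} ∪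
         {x | ∃ p : ℂ[X], p.eval c = 0 ∧ x = aeval (SmithE f) p}) :
        Submodule (SmithAlgebra f) (SmithAlgebra f)) := by
  let _ : Module ℂ V := Module.compHom V (algebraMap ℂ (SmithAlgebra f))
  have : IsScalarTower ℂ (SmithAlgebra f) V := IsScalarTower.of_algebraMap_smul fun _ _ => rfl
  rw [algebraMap_smul] at hw
  obtain ⟨u, hu⟩ := exists_polyFwdDiff_eq (C 2 * f)
  set J := Submodule.span (SmithAlgebra f)
    ({z | z ∈ Subalgebra.center ℂ (SmithAlgebra f) ∧ ∀ v : V, z • v = 0} ∪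
      {x | ∃ p : ℂ[X], p.eval c = 0 ∧ x = aeval (SmithE f) p})
  have hJ : J ≤ LinearMap.ker (LinearMap.toSpanSingleton (SmithAlgebra f) V w) := by
    refine Submodule.span_le.mpr ?_
    rintro x (⟨-, hx⟩ | ⟨p, hp, rfl⟩)
    · exact hx w
    · simp [aeval_smul_of_smul_eq hw, hp]
  have hEc : SmithE f - algebraMap ℂ _ c ∈ J :=
    Submodule.subset_span (Or.inr ⟨X - C c, by simp, by simp⟩)
  ext r
  refine ⟨fun (hr : r • w = 0) => ?_, fun hr => by simpa using hJ hr⟩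
  obtain ⟨p, hp, i, hi, rfl⟩ := Submodule.mem_sup.mp
    ((SmithAlgebra.adjoin_neg_H_omega_sup_span_eq_top hu hc).symm ▸ Submodule.mem_top (x := r))
  have hiJ : i ∈ J := Submodule.span_le.mpr (Set.singleton_subset_iff.mpr hEc) hi
  have hpw : p • w = 0 := by simpa [add_smul, show i • w = 0 by simpa using hJ hiJ] using hr
  refine J.add_mem (Submodule.span_mono Set.subset_union_left ?_) hiJ
  exact mem_span_of_mem_adjoin_of_smul_eq_zero (SmithAlgebra.semiconjBy_E_neg_H f)
    (SmithAlgebra.omega_mem_center hu) hc hw hcyc hp hpw
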